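/- arXiv:2605.15925 — 4 statements merged into one kernel-verified Lean document; each statement's English description precedes it below -/
import Mathlib

section
/- Let p be a prime with p ≡ 5 (mod 12), let m be odd, let k ∈ ℕ, and let α ∈ 𝔽_p ⊆ R_k satisfy α² = −1. Then the polynomials x² + αx − 1 and x² + α^{−1}x − 1 have no root in R_k; that is, γ² + αγ − 1 ≠ 0 and γ² + α^{−1}γ − 1 ≠ 0 for every γ ∈ R_k. -/
open Polynomial

set_option maxHeartbeats 1000000

/-- `Rk p m k` is the finite chain ring `𝔽_{p^m}[u]/⟨u^k⟩`. -/
noncomputable abbrev Rk (p m k : ℕ) [Fact p.Prime] : Type _ :=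
  AdjoinRoot (X ^ k : (GaloisField p m)[X])

/-- `iZp p m k` is the canonical embedding `𝔽_p → 𝔽_{p^m}[u]/⟨u^k⟩`. -/
noncomputable abbrev iZp (p m k : ℕ) [Fact p.Prime] : ZMod p →+* Rk p m k :=
  (AdjoinRoot.of _).comp (algebraMap (ZMod p) (GaloisField p m))

lemma three_not_square (p m : ℕ) [Fact p.Prime] (hp : p % 12 = 5) (hm : Odd m) :
    ¬ IsSquare (3 : GaloisField p m) := by
  have hm0 : m ≠ 0 := hm.pos.ne'
  haveI : Fintype (GaloisField p m) := Fintype.ofFinite _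
  have hcard : Fintype.card (GaloisField p m) = p ^ m := by
    rw [← Nat.card_eq_fintype_card]; exact GaloisField.card p m hm0
  have hp4 : p % 4 = 1 := by
    have : p % 4 = p % 12 % 4 := (Nat.mod_mod_of_dvd p (by norm_num)).symm
    rw [this, hp]
  have hp3 : p % 3 = 2 := by
    have : p % 3 = p % 12 % 3 := (Nat.mod_mod_of_dvd p (by norm_num)).symm
    rw [this, hp]
  have hchar : ringChar (GaloisField p m) = p := ringChar.eq _ p
  have hchar2 : ringChar (GaloisField p m) ≠ 2 := by
    rw [hchar]; omega
  have h3 : (3 : GaloisField p m) = ((3 : ℕ) : GaloisField p m) := by norm_num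
  rw [h3, FiniteField.isSquare_odd_prime_iff hchar2 (by norm_num), not_not]
  -- compute χ₄ (p^m) = 1
  have hχ : ZMod.χ₄ (Fintype.card (GaloisField p m)) = 1 := by
    rw [hcard]
    have : ((p ^ m : ℕ) : ZMod 4) = 1 := by
      push_cast
      have : (p : ZMod 4) = 1 := by
        rw [show (p : ZMod 4) = ((p % 4 : ℕ) : ZMod 4) from (ZMod.natCast_mod p 4).symm, hp4]
        norm_num
      rw [this, one_pow]
    rw [show ((p ^ m : ℕ) : ZMod 4) = (1 : ZMod 4) from this]
    decide
  have hcard3 : ((Fintype.card (GaloisField p m) : ℕ) : ZMod 3) = -1 := by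
    rw [hcard]
    push_cast
    have : (p : ZMod 3) = -1 := by
      rw [show (p : ZMod 3) = ((p % 3 : ℕ) : ZMod 3) from (ZMod.natCast_mod p 3).symm, hp3]
      decide
    rw [this, hm.neg_one_pow]
  rw [hχ]
  push_cast
  rw [hcard3, one_mul]
  decide

lemma no_root_aux (p m k : ℕ) [Fact p.Prime] (hp : p % 12 = 5) (hm : Odd m)
    (hk : 0 < k) (β : ZMod p) (hβ : β ^ 2 = -1) :
    ∀ γ : Rk p m k, γ ^ 2 + iZp p m k β * γ - 1 ≠ 0 := by
  intro γ hγ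
  set F := GaloisField p m
  have heval : (X ^ k : F[X]).eval₂ (RingHom.id F) 0 = 0 := by
    simp [zero_pow hk.ne']
  set φ : Rk p m k →+* F := AdjoinRoot.lift (RingHom.id F) 0 heval with hφ
  have hφof : ∀ x : F, φ (AdjoinRoot.of _ x) = x := fun x => AdjoinRoot.lift_of heval
  have h0 : (φ γ) ^ 2 + (algebraMap (ZMod p) F β) * (φ γ) - 1 = 0 := by
    have := congrArg φ hγ
    simpa [hφof] using this
  set b : F := algebraMap (ZMod p) F β with hb
  set c : F := φ γ with hc
  have hb2 : b ^ 2 = -1 := by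
    rw [hb, ← map_pow, hβ, map_neg, map_one]
  have hsq : (2 * c + b) ^ 2 = 3 := by
    linear_combination (4 : F) * h0 + hb2
  exact three_not_square p m hp hm ⟨2 * c + b, by rw [← hsq]; ring⟩

/-- Let `p ≡ 5 (mod 12)`, `m` odd, and `α ∈ 𝔽_p ⊆ R_k` with `α² = −1`.  Then the
polynomials `x² + αx − 1` and `x² + α⁻¹x − 1` have no root in `R_k`. -/
theorem stmt_13 (p m k : ℕ) [Fact p.Prime] (hp : p % 12 = 5) (hm : Odd m)
    (hk : 0 < k) (α : ZMod p) (hα : α ^ 2 = -1) :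
    (∀ γ : Rk p m k, γ ^ 2 + iZp p m k α * γ - 1 ≠ 0) ∧
    (∀ γ : Rk p m k, γ ^ 2 + iZp p m k α⁻¹ * γ - 1 ≠ 0) := by
  have hinv : α⁻¹ = -α := by
    have h1 : α * -α = 1 := by linear_combination -hα
    exact inv_eq_of_mul_eq_one_right h1
  refine ⟨no_root_aux p m k hp hm hk α hα, no_root_aux p m k hp hm hk α⁻¹ ?_⟩
  rw [hinv]; linear_combination hα
end

section
/- Let p be a prime with p ≡ 5 (mod 12), let m be odd, let s, k ∈ ℕ, and let α ∈ 𝔽_p ⊆ R_k satisfy α² = −1. Then x^{6p^s} + 1 = (x−α)^{p^s}(x+α)^{p^s}(x²+αx−1)^{p^s}(x²+α^{−1}x−1)^{p^s} in R_k[x], and there is a ring isomorphism R_k[x]/⟨x^{6p^s} + 1⟩ ≅ R_k[x]/⟨(x−α)^{p^s}⟩ × R_k[x]/⟨(x+α)^{p^s}⟩ × R_k[x]/⟨(x²+αx−1)^{p^s}⟩ × R_k[x]/⟨(x²+α^{−1}x−1)^{p^s}⟩. -/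
open Polynomial

set_option maxHeartbeats 1000000

/-- Let `p ≡ 5 (mod 12)`, `m` odd, and `α ∈ 𝔽_p ⊆ R_k` with `α² = −1`.  Then
`x^{6p^s} + 1 = (x−α)^{p^s}(x+α)^{p^s}(x²+αx−1)^{p^s}(x²+α⁻¹x−1)^{p^s}` in
`R_k[x]`, and `R_k[x]/⟨x^{6p^s} + 1⟩ ≅ R_k[x]/⟨(x−α)^{p^s}⟩ ×
R_k[x]/⟨(x+α)^{p^s}⟩ × R_k[x]/⟨(x²+αx−1)^{p^s}⟩ × R_k[x]/⟨(x²+α⁻¹x−1)^{p^s}⟩`. -/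
theorem stmt_15 (p m s k : ℕ) [Fact p.Prime] (hp : p % 12 = 5) (hm : Odd m)
    (hk : 0 < k) (α : ZMod p) (hα : α ^ 2 = -1) :
    (X ^ (6 * p ^ s) + 1 : (Rk p m k)[X]) =
      (X - C (iZp p m k α)) ^ p ^ s * (X + C (iZp p m k α)) ^ p ^ s *
        (X ^ 2 + C (iZp p m k α) * X - 1) ^ p ^ s *
        (X ^ 2 + C (iZp p m k α⁻¹) * X - 1) ^ p ^ s ∧
    Nonempty
      (((Rk p m k)[X] ⧸
          Ideal.span {(X : (Rk p m k)[X]) ^ (6 * p ^ s) + 1}) ≃+*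
        ((Rk p m k)[X] ⧸
          Ideal.span {((X : (Rk p m k)[X]) - C (iZp p m k α)) ^ p ^ s}) ×
        ((Rk p m k)[X] ⧸
          Ideal.span {((X : (Rk p m k)[X]) + C (iZp p m k α)) ^ p ^ s}) ×
        ((Rk p m k)[X] ⧸
          Ideal.span
            {((X : (Rk p m k)[X]) ^ 2 + C (iZp p m k α) * X - 1) ^ p ^ s}) ×
        ((Rk p m k)[X] ⧸
          Ideal.span
            {((X : (Rk p m k)[X]) ^ 2 + C (iZp p m k α⁻¹) * X - 1) ^ p ^ s})) := by
  classical
  have hpp : p.Prime := Fact.out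
  -- basic facts about `p`
  have hp2 : p ≠ 2 := by omega
  have hp3 : p % 3 = 2 := by omega
  -- Rk is nontrivial and has characteristic p
  haveI hnt : Nontrivial (Rk p m k) := by
    refine AdjoinRoot.nontrivial _ ?_
    rw [degree_X_pow]
    exact_mod_cast Nat.pos_iff_ne_zero.mp hk
  haveI : CharP (Rk p m k) p :=
    charP_of_injective_ringHom (iZp p m k).injective p
  set R := Rk p m k
  set φ : ZMod p →+* R := iZp p m k with hφ
  -- arithmetic in ZMod p
  haveI : Fact (1 < p) := ⟨hpp.one_lt⟩
  have hα0 : α ≠ 0 := by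
    intro h
    rw [h] at hα
    exact one_ne_zero (by linear_combination hα : (1 : ZMod p) = 0)
  have hαinv : α⁻¹ = -α := by
    have : α * (-α) = 1 := by
      have : -(α ^ 2) = 1 := by rw [hα]; ring
      linear_combination this
    exact inv_eq_of_mul_eq_one_right this
  have hzero : ∀ c : ℕ, 0 < c → c < p → ((c : ℕ) : ZMod p) ≠ 0 := by
    intro c hc hcp h
    rw [ZMod.natCast_eq_zero_iff] at h
    have := Nat.le_of_dvd hc h
    omega
  have h2z : (2 : ZMod p) ≠ 0 := by
    have := hzero 2 (by norm_num) (by omega); exact_mod_cast this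
  have h3z : (3 : ZMod p) ≠ 0 := by
    have := hzero 3 (by norm_num) (by omega); exact_mod_cast this
  -- constants in R
  set a : R := φ α with ha
  set i2 : R := φ (2⁻¹) with hi2
  set i3 : R := φ (3⁻¹) with hi3
  have ha2 : a ^ 2 = -1 := by rw [ha, ← map_pow, hα, map_neg, map_one]
  have h2R : (2 : R) * i2 = 1 := by
    rw [hi2, ← map_ofNat φ 2, ← map_mul, mul_inv_cancel₀ h2z, map_one]
  have h3R : (3 : R) * i3 = 1 := by
    rw [hi3, ← map_ofNat φ 3, ← map_mul, mul_inv_cancel₀ h3z, map_one]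
  -- lifted to R[X]
  set A : R[X] := C a with hA
  have ha2' : A ^ 2 = -1 := by rw [hA, ← C_pow, ha2, map_neg, map_one]
  have h2' : (2 : R[X]) * C i2 = 1 := by
    rw [← map_ofNat (C : R →+* R[X]) 2, ← C_mul, h2R, map_one]
  have h3' : (3 : R[X]) * C i3 = 1 := by
    rw [← map_ofNat (C : R →+* R[X]) 3, ← C_mul, h3R, map_one]
  -- the inverse constant
  have hACinv : (C (φ α⁻¹) : R[X]) = -A := by
    rw [hαinv, map_neg, map_neg, hA]
  -- the four factors
  set f1 : R[X] := X - A with hf1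
  set f2 : R[X] := X + A with hf2
  set f3 : R[X] := X ^ 2 + A * X - 1 with hf3
  set f4 : R[X] := X ^ 2 - A * X - 1 with hf4
  -- pairwise coprimality
  have hc12 : IsCoprime f1 f2 := by
    refine ⟨-(C i2 * -A), C i2 * -A, ?_⟩
    rw [hf1, hf2]
    linear_combination (-2 * C i2) * ha2' + h2'
  have hc13 : IsCoprime f1 f3 := by
    refine ⟨C i3 * (X + 2 * A), -C i3, ?_⟩
    rw [hf1, hf3]
    linear_combination (-2 * C i3) * ha2' + h3'
  have hc14 : IsCoprime f1 f4 := by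
    refine ⟨X, -1, ?_⟩
    rw [hf1, hf4]; ring
  have hc23 : IsCoprime f2 f3 := by
    refine ⟨X, -1, ?_⟩
    rw [hf2, hf3]; ring
  have hc24 : IsCoprime f2 f4 := by
    refine ⟨C i3 * (X - 2 * A), -C i3, ?_⟩
    rw [hf2, hf4]
    linear_combination (-2 * C i3) * ha2' + h3'
  have hc34 : IsCoprime f3 f4 := by
    refine ⟨C i2 * -A * (X - A), C i2 * -A * -(X + A), ?_⟩
    rw [hf3, hf4]
    linear_combination (-2 * C i2) * ha2' + h2'
  -- degree-6 factorization
  have hfac6 : f1 * f2 * f3 * f4 = X ^ 6 + 1 := by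
    rw [hf1, hf2, hf3, hf4]
    linear_combination (X ^ 2 * A ^ 2 + X ^ 2 - 2 * X ^ 4 - 1) * ha2'
  -- main factorization
  set n : ℕ := p ^ s with hn
  have hmain : (X ^ (6 * p ^ s) + 1 : R[X]) = f1 ^ n * f2 ^ n * f3 ^ n * f4 ^ n := by
    have : (X ^ (6 * p ^ s) + 1 : R[X]) = (X ^ 6 + 1) ^ n := by
      rw [hn, add_pow_char_pow, one_pow, ← pow_mul, mul_comm 6 (p ^ s)]
    rw [this, ← hfac6, mul_pow, mul_pow, mul_pow]
  have hb4 : (X ^ 2 + C (φ α⁻¹) * X - 1 : R[X]) = f4 := by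
    rw [hACinv, hf4]; ring
  constructor
  · rw [hb4]
    exact hmain
  · -- the ring isomorphism
    have cop34 : IsCoprime (f3 ^ n) (f4 ^ n) := hc34.pow
    have cop234 : IsCoprime (f2 ^ n) (f3 ^ n * f4 ^ n) :=
      (hc23.pow (m := n) (n := n)).mul_right (hc24.pow)
    have cop1 : IsCoprime (f1 ^ n) (f2 ^ n * (f3 ^ n * f4 ^ n)) :=
      (hc12.pow (m := n) (n := n)).mul_right
        ((hc13.pow (m := n) (n := n)).mul_right (hc14.pow))
    have E34 : (R[X] ⧸ Ideal.span {f3 ^ n * f4 ^ n}) ≃+*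
        (R[X] ⧸ Ideal.span {f3 ^ n}) × (R[X] ⧸ Ideal.span {f4 ^ n}) := by
      rw [← Ideal.span_singleton_mul_span_singleton]
      exact Ideal.quotientMulEquivQuotientProd _ _
        ((Ideal.isCoprime_span_singleton_iff _ _).mpr cop34)
    have E234 : (R[X] ⧸ Ideal.span {f2 ^ n * (f3 ^ n * f4 ^ n)}) ≃+*
        (R[X] ⧸ Ideal.span {f2 ^ n}) ×
          ((R[X] ⧸ Ideal.span {f3 ^ n}) × (R[X] ⧸ Ideal.span {f4 ^ n})) := by
      rw [← Ideal.span_singleton_mul_span_singleton]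
      exact (Ideal.quotientMulEquivQuotientProd _ _
        ((Ideal.isCoprime_span_singleton_iff _ _).mpr cop234)).trans
        ((RingEquiv.refl _).prodCongr E34)
    have E : (R[X] ⧸ Ideal.span {f1 ^ n * (f2 ^ n * (f3 ^ n * f4 ^ n))}) ≃+*
        (R[X] ⧸ Ideal.span {f1 ^ n}) ×
          ((R[X] ⧸ Ideal.span {f2 ^ n}) ×
            ((R[X] ⧸ Ideal.span {f3 ^ n}) × (R[X] ⧸ Ideal.span {f4 ^ n}))) := by
      rw [← Ideal.span_singleton_mul_span_singleton]
      exact (Ideal.quotientMulEquivQuotientProd _ _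
        ((Ideal.isCoprime_span_singleton_iff _ _).mpr cop1)).trans
        ((RingEquiv.refl _).prodCongr E234)
    have hgen : (X ^ (6 * p ^ s) + 1 : R[X]) = f1 ^ n * (f2 ^ n * (f3 ^ n * f4 ^ n)) := by
      rw [hmain]; ring
    rw [hb4, hgen]
    exact ⟨E⟩
end

section
/- Let p be a prime with p ≡ 7 (mod 12), let m be odd, let s, k ∈ ℕ, and let α ∈ 𝔽_p ⊆ R_k have multiplicative order 6. Then none of the polynomials x² + 1, x² − α, x² − α^{−1} has a root in R_k, and there is a ring isomorphism R_k[x]/⟨x^{6p^s} + 1⟩ ≅ R_k[x]/⟨(x²+1)^{p^s}⟩ × R_k[x]/⟨(x²−α)^{p^s}⟩ × R_k[x]/⟨(x²−α^{−1})^{p^s}⟩. -/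
open Polynomial

set_option maxHeartbeats 1000000

/-- The residue map `R_k → 𝔽_{p^m}` sending `u ↦ 0`. -/
noncomputable def resMap (p m k : ℕ) [Fact p.Prime] (hk : k ≠ 0) :
    Rk p m k →+* GaloisField p m :=
  AdjoinRoot.lift (RingHom.id _) 0 (by simp [zero_pow hk])

lemma resMap_of (p m k : ℕ) [Fact p.Prime] (hk : k ≠ 0) (a : GaloisField p m) :
    resMap p m k hk (AdjoinRoot.of _ a) = a := by
  simp [resMap, AdjoinRoot.lift_of]

lemma pow_odd_mod12 {a m : ℕ} (h : a % 12 = 7) (hm : Odd m) : a ^ m % 12 = 7 := by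
  obtain ⟨t, rfl⟩ := hm
  induction t with
  | zero => simpa using h
  | succ n ih =>
      have e : 2 * (n + 1) + 1 = (2 * n + 1) + 2 := by ring
      rw [e, pow_add, Nat.mul_mod, ih, Nat.pow_mod, h]

lemma pow_odd_mod4 {a m : ℕ} (h : a % 4 = 3) (hm : Odd m) : a ^ m % 4 = 3 := by
  obtain ⟨t, rfl⟩ := hm
  induction t with
  | zero => simpa using h
  | succ n ih =>
      have e : 2 * (n + 1) + 1 = (2 * n + 1) + 2 := by ring
      rw [e, pow_add, Nat.mul_mod, ih, Nat.pow_mod, h]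

lemma coprime_of_isUnit_sub {R : Type*} [CommRing R] {f g : R}
    (h : IsUnit (f - g)) : IsCoprime f g := by
  obtain ⟨v, hv⟩ := h.exists_left_inv
  exact ⟨v, -v, by linear_combination hv⟩

lemma no_sqrt_of_orderOf_six {F : Type*} [Field F] [Fintype F]
    (hq : Fintype.card F % 12 = 7) {a : F} (ha : orderOf a = 6) (β : F) :
    β ^ 2 ≠ a := by
  intro h
  have h6 : a ^ 6 = 1 := by rw [← ha]; exact pow_orderOf_eq_one a
  have ha0 : a ≠ 0 := by rintro rfl; simp at h6
  have hβ0 : β ≠ 0 := by rintro rfl; rw [show ((0:F)^2) = 0 by ring] at h; exact ha0 h.symm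
  have h2 : a ^ 2 ≠ 1 := by
    intro h'
    have := orderOf_dvd_of_pow_eq_one h'
    rw [ha] at this; norm_num at this
  have h3 : a ^ 3 ≠ 1 := by
    intro h'
    have := orderOf_dvd_of_pow_eq_one h'
    rw [ha] at this; norm_num at this
  have hβ12 : β ^ 12 = 1 := by
    rw [show (12:ℕ) = 2 * 6 by norm_num, pow_mul, h, h6]
  have hβ4 : β ^ 4 ≠ 1 := by
    rw [show (4:ℕ) = 2 * 2 by norm_num, pow_mul, h]; exact h2
  have hβ6 : β ^ 6 ≠ 1 := by
    rw [show (6:ℕ) = 2 * 3 by norm_num, pow_mul, h]; exact h3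
  have hd12 : orderOf β ∣ 12 := orderOf_dvd_of_pow_eq_one hβ12
  have hnd4 : ¬ orderOf β ∣ 4 := fun h' => hβ4 (orderOf_dvd_iff_pow_eq_one.mp h')
  have hnd6 : ¬ orderOf β ∣ 6 := fun h' => hβ6 (orderOf_dvd_iff_pow_eq_one.mp h')
  have hord : orderOf β = 12 := by
    have hpos : 0 < orderOf β := Nat.pos_of_dvd_of_pos hd12 (by norm_num)
    have hle : orderOf β ≤ 12 := Nat.le_of_dvd (by norm_num) hd12
    set d := orderOf β with hdd
    clear_value d
    interval_cases d <;> first | rfl | (exfalso; revert hd12 hnd4 hnd6; decide)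
  have h1 : β ^ (Fintype.card F - 1) = 1 := FiniteField.pow_card_sub_one_eq_one β hβ0
  have hdvd : 12 ∣ Fintype.card F - 1 := hord ▸ orderOf_dvd_of_pow_eq_one h1
  have hge : 1 ≤ Fintype.card F := Fintype.card_pos
  omega

lemma no_sqrt_neg_one {F : Type*} [Field F] [Fintype F]
    (hq : Fintype.card F % 4 = 3) (β : F) : β ^ 2 ≠ -1 := by
  intro h
  have : IsSquare (-1 : F) := ⟨β, by rw [← h]; ring⟩
  exact (FiniteField.isSquare_neg_one_iff.mp this) hq

/-- Let `p ≡ 7 (mod 12)`, `m` odd, and `α ∈ 𝔽_p ⊆ R_k` of multiplicative order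
`6`.  Then none of `x² + 1`, `x² − α`, `x² − α⁻¹` has a root in `R_k`, and
`R_k[x]/⟨x^{6p^s} + 1⟩ ≅ R_k[x]/⟨(x²+1)^{p^s}⟩ × R_k[x]/⟨(x²−α)^{p^s}⟩ ×
R_k[x]/⟨(x²−α⁻¹)^{p^s}⟩`. -/
theorem stmt_17 (p m s k : ℕ) [Fact p.Prime] (hp : p % 12 = 7) (hm : Odd m)
    (hk : 0 < k) (α : ZMod p) (hα : orderOf α = 6) :
    (∀ γ : Rk p m k, γ ^ 2 + 1 ≠ 0) ∧
    (∀ γ : Rk p m k, γ ^ 2 - iZp p m k α ≠ 0) ∧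
    (∀ γ : Rk p m k, γ ^ 2 - iZp p m k α⁻¹ ≠ 0) ∧
    Nonempty
      (((Rk p m k)[X] ⧸
          Ideal.span {(X : (Rk p m k)[X]) ^ (6 * p ^ s) + 1}) ≃+*
        ((Rk p m k)[X] ⧸
          Ideal.span {((X : (Rk p m k)[X]) ^ 2 + 1) ^ p ^ s}) ×
        ((Rk p m k)[X] ⧸
          Ideal.span {((X : (Rk p m k)[X]) ^ 2 - C (iZp p m k α)) ^ p ^ s}) ×
        ((Rk p m k)[X] ⧸
          Ideal.span
            {((X : (Rk p m k)[X]) ^ 2 - C (iZp p m k α⁻¹)) ^ p ^ s})) := by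
  have hk0 : k ≠ 0 := hk.ne'
  set F := GaloisField p m with hF
  haveI : Fintype F := Fintype.ofFinite F
  have hm0 : m ≠ 0 := by rintro rfl; simp [Nat.odd_iff] at hm
  have hcard : Fintype.card F = p ^ m := by
    rw [← Nat.card_eq_fintype_card]; exact GaloisField.card p m hm0
  have hq12 : Fintype.card F % 12 = 7 := by rw [hcard]; exact pow_odd_mod12 hp hm
  have hq4 : Fintype.card F % 4 = 3 := by
    rw [hcard]; exact pow_odd_mod4 (by omega) hm
  set φ := resMap p m k hk0 with hφ
  -- basic facts about α
  have h6 : α ^ 6 = 1 := by rw [← hα]; exact pow_orderOf_eq_one α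
  have hα0 : α ≠ 0 := by rintro rfl; simp at h6
  have h2 : α ^ 2 ≠ 1 := by
    intro h'
    have := orderOf_dvd_of_pow_eq_one h'
    rw [hα] at this; norm_num at this
  have h3 : α ^ 3 ≠ 1 := by
    intro h'
    have := orderOf_dvd_of_pow_eq_one h'
    rw [hα] at this; norm_num at this
  have hα3 : α ^ 3 = -1 := by
    have hsq : (α ^ 3) * (α ^ 3) = 1 := by
      rw [← pow_add]; norm_num; exact h6
    rcases mul_self_eq_one_iff.mp hsq with h' | h'
    · exact absurd h' h3
    · exact h'
  have hne1 : α + 1 ≠ 0 := by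
    intro h'
    have : α = -1 := by linear_combination h'
    exact h2 (by rw [this]; ring)
  have hquad : α ^ 2 - α + 1 = 0 := by
    have hfac : (α + 1) * (α ^ 2 - α + 1) = 0 := by linear_combination hα3
    rcases mul_eq_zero.mp hfac with h' | h'
    · exact absurd h' hne1
    · exact h'
  have hinv : α⁻¹ = 1 - α := by
    apply inv_eq_of_mul_eq_one_right
    linear_combination -hquad
  have hsum : α + α⁻¹ = 1 := by rw [hinv]; ring
  have hprod : α * α⁻¹ = 1 := mul_inv_cancel₀ hα0
  -- orderOf α⁻¹ = 6
  have hαinv6 : orderOf α⁻¹ = 6 := by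
    have hd6 : orderOf α⁻¹ ∣ 6 :=
      orderOf_dvd_of_pow_eq_one (by rw [inv_pow, h6, inv_one])
    have h6d : 6 ∣ orderOf α⁻¹ := by
      rw [← hα]
      apply orderOf_dvd_of_pow_eq_one
      have hpo := pow_orderOf_eq_one α⁻¹
      rw [inv_pow, inv_eq_one] at hpo
      exact hpo
    exact Nat.dvd_antisymm hd6 h6d
  -- the algebra map to F is injective; orders transfer
  have hinj : Function.Injective (algebraMap (ZMod p) F) :=
    (algebraMap (ZMod p) F).injective
  have horda : orderOf (algebraMap (ZMod p) F α) = 6 := by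
    have h' := orderOf_injective (algebraMap (ZMod p) F).toMonoidHom hinj α
    simpa [hα] using h'
  have hordainv : orderOf (algebraMap (ZMod p) F α⁻¹) = 6 := by
    have h' := orderOf_injective (algebraMap (ZMod p) F).toMonoidHom hinj α⁻¹
    simpa [hαinv6] using h'
  have hφi : ∀ b : ZMod p, φ (iZp p m k b) = algebraMap (ZMod p) F b := by
    intro b; exact resMap_of p m k hk0 _
  refine ⟨?_, ?_, ?_, ?_⟩
  · intro γ hγ
    have h' : (φ γ) ^ 2 = -1 := by
      have := congrArg φ hγ
      rw [map_add, map_pow, map_one, map_zero] at this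
      linear_combination this
    exact no_sqrt_neg_one hq4 (φ γ) h'
  · intro γ hγ
    have h' : (φ γ) ^ 2 = algebraMap (ZMod p) F α := by
      have := congrArg φ hγ
      rw [map_sub, map_pow, map_zero, hφi] at this
      linear_combination this
    exact no_sqrt_of_orderOf_six hq12 horda (φ γ) h'
  · intro γ hγ
    have h' : (φ γ) ^ 2 = algebraMap (ZMod p) F α⁻¹ := by
      have := congrArg φ hγ
      rw [map_sub, map_pow, map_zero, hφi] at this
      linear_combination this
    exact no_sqrt_of_orderOf_six hq12 hordainv (φ γ) h'
  · -- the ring isomorphism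
    set R := Rk p m k with hR
    have hofinj : Function.Injective (AdjoinRoot.of (X ^ k : F[X])) := by
      intro x y h
      have := congrArg φ h
      rwa [resMap_of, resMap_of] at this
    haveI : CharP R p := charP_of_injective_ringHom hofinj p
    set a := iZp p m k α with ha
    set b := iZp p m k α⁻¹ with hb
    have hsumR : a + b = 1 := by rw [ha, hb, ← map_add, hsum, map_one]
    have hprodR : a * b = 1 := by rw [ha, hb, ← map_mul, hprod, map_one]
    set f1 : R[X] := (X ^ 2 + 1) ^ p ^ s with hf1
    set f2 : R[X] := (X ^ 2 - C a) ^ p ^ s with hf2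
    set f3 : R[X] := (X ^ 2 - C b) ^ p ^ s with hf3
    have hmapUnit : ∀ c : ZMod p, c ≠ 0 → IsUnit ((iZp p m k) c) :=
      fun c hc => (isUnit_iff_ne_zero.mpr hc).map (iZp p m k)
    have hinv_ne : α⁻¹ + 1 ≠ 0 := by
      intro h'
      have e1 : α⁻¹ = -1 := by linear_combination h'
      have e2 : α = -1 := by rw [← inv_inv α, e1]; norm_num
      exact h2 (by rw [e2]; ring)
    have hdiff_ne : α⁻¹ - α ≠ 0 := by
      intro h'
      have e1 : α = α⁻¹ := by linear_combination -h'
      apply h2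
      calc α ^ 2 = α * α := sq α
        _ = α * α⁻¹ := by rw [← e1]
        _ = 1 := hprod
    have hc12 : IsCoprime ((X : R[X]) ^ 2 + 1) (X ^ 2 - C a) := by
      apply coprime_of_isUnit_sub
      have e : ((X : R[X]) ^ 2 + 1) - (X ^ 2 - C a) = C (iZp p m k (α + 1)) := by
        rw [map_add (iZp p m k), map_one, ← ha, map_add, map_one]; ring
      rw [e]; exact (hmapUnit _ hne1).map C
    have hc13 : IsCoprime ((X : R[X]) ^ 2 + 1) (X ^ 2 - C b) := by
      apply coprime_of_isUnit_sub
      have e : ((X : R[X]) ^ 2 + 1) - (X ^ 2 - C b) = C (iZp p m k (α⁻¹ + 1)) := by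
        rw [map_add (iZp p m k), map_one, ← hb, map_add, map_one]; ring
      rw [e]; exact (hmapUnit _ hinv_ne).map C
    have hc23 : IsCoprime ((X : R[X]) ^ 2 - C a) (X ^ 2 - C b) := by
      apply coprime_of_isUnit_sub
      have e : ((X : R[X]) ^ 2 - C a) - (X ^ 2 - C b) = C (iZp p m k (α⁻¹ - α)) := by
        rw [map_sub (iZp p m k), ← ha, ← hb, map_sub]; ring
      rw [e]; exact (hmapUnit _ hdiff_ne).map C
    have hcp12 : IsCoprime f1 f2 := hc12.pow
    have hcp13 : IsCoprime f1 f3 := hc13.pow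
    have hcp23 : IsCoprime f2 f3 := hc23.pow
    have hcp1_23 : IsCoprime f1 (f2 * f3) := hcp12.mul_right hcp13
    have hs' : C a + C b = (1 : R[X]) := by rw [← map_add, hsumR, map_one]
    have hm' : C a * C b = (1 : R[X]) := by rw [← map_mul, hprodR, map_one]
    have h1 : ((X : R[X]) ^ 2 + 1) * ((X ^ 2 - C a) * (X ^ 2 - C b)) = X ^ 6 + 1 := by
      linear_combination (-(X : R[X]) ^ 2 - 1) * (X : R[X]) ^ 2 * hs' +
        ((X : R[X]) ^ 2 + 1) * hm'
    haveI : CharP R[X] p := by infer_instance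
    have hfact : (X : R[X]) ^ (6 * p ^ s) + 1 = f1 * (f2 * f3) := by
      have e : (X : R[X]) ^ (6 * p ^ s) + 1 = ((X : R[X]) ^ 6 + 1) ^ p ^ s := by
        rw [add_pow_char_pow, one_pow, ← pow_mul]
      rw [e, ← h1, mul_pow, mul_pow]
    have hsp23 : Ideal.span {f2} ⊓ Ideal.span {f3} = Ideal.span {f2 * f3} := by
      rw [Ideal.inf_eq_mul_of_isCoprime ((Ideal.isCoprime_span_singleton_iff _ _).mpr hcp23),
        Ideal.span_singleton_mul_span_singleton]
    have hsp : Ideal.span {(X : R[X]) ^ (6 * p ^ s) + 1} =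
        Ideal.span {f1} ⊓ Ideal.span {f2 * f3} := by
      rw [hfact,
        Ideal.inf_eq_mul_of_isCoprime ((Ideal.isCoprime_span_singleton_iff _ _).mpr hcp1_23),
        Ideal.span_singleton_mul_span_singleton]
    exact ⟨(Ideal.quotEquivOfEq hsp).trans
      ((Ideal.quotientInfEquivQuotientProd _ _
          ((Ideal.isCoprime_span_singleton_iff _ _).mpr hcp1_23)).trans
        (RingEquiv.prodCongr (RingEquiv.refl _)
          ((Ideal.quotEquivOfEq hsp23.symm).trans
            (Ideal.quotientInfEquivQuotientProd _ _
              ((Ideal.isCoprime_span_singleton_iff _ _).mpr hcp23)))))⟩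
end

section
/- Let p be a prime with p ≡ 11 (mod 12). Then there exists β ∈ 𝔽_p with β² = 3, and for any such β one has x⁶ + 1 = (x² + 1)(x² + βx + 1)(x² − βx + 1) in 𝔽_p[x]. Moreover, if m is odd and s, k ∈ ℕ, then the polynomials x² + 1, x² + βx + 1, x² − βx + 1 have no root in R_k, and there is a ring isomorphism R_k[x]/⟨x^{6p^s} + 1⟩ ≅ R_k[x]/⟨(x²+1)^{p^s}⟩ × R_k[x]/⟨(x²+βx+1)^{p^s}⟩ × R_k[x]/⟨(x²−βx+1)^{p^s}⟩. -/
open Polynomial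

set_option maxHeartbeats 1000000

lemma notsq2 : ¬ IsSquare (2 : ZMod 3) := by decide

-- existence of a square root of 3
lemma sq3 (p : ℕ) [Fact p.Prime] (hp : p % 12 = 11) : ∃ β : ZMod p, β ^ 2 = 3 := by
  haveI : Fact (Nat.Prime 3) := ⟨by norm_num⟩
  have hple : 12 * (p / 12) + p % 12 = p := Nat.div_add_mod p 12 |>.symm ▸ (Nat.div_add_mod p 12)
  have hp4 : p % 4 = 3 := by omega
  have hp3 : p % 3 = 2 := by omega
  have hpne : p ≠ 3 := by omega
  have h := ZMod.exists_sq_eq_prime_iff_of_mod_four_eq_three (p := p) (q := 3) hp4 (by norm_num) hpne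
  have hnot : ¬ IsSquare ((p : ℕ) : ZMod 3) := by
    have h22 := notsq2
    have : ((p : ℕ) : ZMod 3) = (2 : ZMod 3) := by rw [← ZMod.natCast_mod, hp3]; norm_num
    rw [this]; exact h22
  have hsq : IsSquare (((3 : ℕ) : ZMod p)) := h.mpr hnot
  obtain ⟨r, hr⟩ := hsq
  exact ⟨r, by rw [pow_two, ← hr]; norm_num⟩

/-- Let `p ≡ 11 (mod 12)`.  There exists `β ∈ 𝔽_p` with `β² = 3`, and for any
such `β` one has `x⁶ + 1 = (x² + 1)(x² + βx + 1)(x² − βx + 1)` in `𝔽_p[x]`.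
Moreover, for `m` odd and `s, k ∈ ℕ`, the polynomials `x² + 1`, `x² + βx + 1`,
`x² − βx + 1` have no root in `R_k`, and `R_k[x]/⟨x^{6p^s} + 1⟩ ≅
R_k[x]/⟨(x²+1)^{p^s}⟩ × R_k[x]/⟨(x²+βx+1)^{p^s}⟩ × R_k[x]/⟨(x²−βx+1)^{p^s}⟩`. -/
theorem stmt_18 (p : ℕ) [Fact p.Prime] (hp : p % 12 = 11) :
    (∃ β : ZMod p, β ^ 2 = 3) ∧
    ∀ β : ZMod p, β ^ 2 = 3 →
      (X ^ 6 + 1 : (ZMod p)[X]) =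
        (X ^ 2 + 1) * (X ^ 2 + C β * X + 1) * (X ^ 2 - C β * X + 1) ∧
      ∀ m s k : ℕ, Odd m → 0 < k →
        (∀ γ : Rk p m k, γ ^ 2 + 1 ≠ 0) ∧
        (∀ γ : Rk p m k, γ ^ 2 + iZp p m k β * γ + 1 ≠ 0) ∧
        (∀ γ : Rk p m k, γ ^ 2 - iZp p m k β * γ + 1 ≠ 0) ∧
        Nonempty
          (((Rk p m k)[X] ⧸
              Ideal.span {(X : (Rk p m k)[X]) ^ (6 * p ^ s) + 1}) ≃+*
            ((Rk p m k)[X] ⧸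
              Ideal.span {((X : (Rk p m k)[X]) ^ 2 + 1) ^ p ^ s}) ×
            ((Rk p m k)[X] ⧸
              Ideal.span
                {((X : (Rk p m k)[X]) ^ 2 + C (iZp p m k β) * X + 1) ^ p ^ s}) ×
            ((Rk p m k)[X] ⧸
              Ideal.span
                {((X : (Rk p m k)[X]) ^ 2 - C (iZp p m k β) * X + 1) ^ p ^ s})) := by
  have hple : 12 * (p / 12) + p % 12 = p := Nat.div_add_mod p 12
  have hp4 : p % 4 = 3 := by omega
  have h2ne : (2 : ZMod p) ≠ 0 := by
    have : ((2 : ℕ) : ZMod p) ≠ 0 := by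
      rw [Ne, ZMod.natCast_eq_zero_iff]
      intro hd
      have := Nat.le_of_dvd (by norm_num) hd
      omega
    simpa using this
  have h3ne : (3 : ZMod p) ≠ 0 := by
    have : ((3 : ℕ) : ZMod p) ≠ 0 := by
      rw [Ne, ZMod.natCast_eq_zero_iff]
      intro hd
      have := Nat.le_of_dvd (by norm_num) hd
      omega
    simpa using this
  refine ⟨sq3 p hp, fun β hβ => ?_⟩
  constructor
  · have hC : (C β : (ZMod p)[X]) ^ 2 = 3 := by
      rw [← C_pow, hβ]; simp [map_ofNat]
    linear_combination (X ^ 2 * (X ^ 2 + 1) : (ZMod p)[X]) * hC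
  intro m s k hm hk
  have hm0 : m ≠ 0 := hm.pos.ne'
  set F := GaloisField p m with hF
  -- the reduction map to the residue field
  have hev : (X ^ k : F[X]).eval₂ (RingHom.id F) 0 = 0 := by
    simp [hk.ne', zero_pow]
  set φ : Rk p m k →+* F := AdjoinRoot.lift (RingHom.id F) 0 hev with hφ
  have hφof : ∀ a : F, φ (AdjoinRoot.of _ a) = a := fun a => AdjoinRoot.lift_of hev
  -- -1 is not a square in F
  haveI : Fintype F := Fintype.ofFinite F
  have hcard : Fintype.card F % 4 = 3 := by
    rw [← Nat.card_eq_fintype_card, GaloisField.card p m hm0]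
    obtain ⟨t, ht⟩ := hm
    have h9 : 9 ^ t % 4 = 1 := by rw [Nat.pow_mod]; norm_num
    have hpow : p ^ m % 4 = 3 ^ m % 4 := by rw [Nat.pow_mod, hp4]
    have h3m : (3 : ℕ) ^ m = 9 ^ t * 3 := by
      subst ht; rw [pow_succ, pow_mul]; norm_num
    rw [hpow, h3m, Nat.mul_mod, h9]
  have hnsq : ¬ IsSquare (-1 : F) := by
    rw [FiniteField.isSquare_neg_one_iff, hcard]
    simp
  -- the image of β in F
  set b₀ : F := φ (iZp p m k β) with hb₀
  have hb0sq : b₀ ^ 2 = 3 := by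
    rw [hb₀, ← map_pow, ← map_pow, hβ]; simp [map_ofNat]
  refine ⟨?_, ?_, ?_, ?_⟩
  · intro γ hγ
    apply hnsq
    have h := congrArg φ hγ
    simp only [map_add, map_pow, map_one, map_zero] at h
    exact ⟨φ γ, by linear_combination -h⟩
  · intro γ hγ
    apply hnsq
    have h := congrArg φ hγ
    simp only [map_add, map_pow, map_mul, map_one, map_zero] at h
    exact ⟨2 * φ γ + b₀, by linear_combination -4 * h - hb0sq⟩
  · intro γ hγ
    apply hnsq
    have h := congrArg φ hγ
    simp only [map_sub, map_add, map_pow, map_mul, map_one, map_zero] at h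
    exact ⟨2 * φ γ - b₀, by linear_combination -4 * h - hb0sq⟩
  -- the ring isomorphism
  · have hofinj : Function.Injective (AdjoinRoot.of (X ^ k : F[X])) :=
      Function.LeftInverse.injective (g := φ) hφof
    haveI : CharP (Rk p m k) p := charP_of_injective_ringHom hofinj p
    haveI : CharP ((Rk p m k)[X]) p := inferInstance
    set A := (Rk p m k)[X] with hA
    set b : Rk p m k := iZp p m k β with hb
    have hCb : (C b : A) ^ 2 = 3 := by
      rw [← C_pow, hb, ← map_pow, hβ]; simp [map_ofNat]
    set c : Rk p m k := iZp p m k ((3 : ZMod p)⁻¹) with hc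
    set d : Rk p m k := iZp p m k ((2 : ZMod p)⁻¹) with hd
    have hc3 : (3 : A) * C c = 1 := by
      have h1 : (3 : Rk p m k) * c = 1 := by
        rw [hc, show (3 : Rk p m k) = iZp p m k 3 from (map_ofNat _ 3).symm, ← map_mul,
          mul_inv_cancel₀ h3ne, map_one]
      simpa [map_ofNat] using congrArg C h1
    have hd2 : (2 : A) * C d = 1 := by
      have h1 : (2 : Rk p m k) * d = 1 := by
        rw [hd, show (2 : Rk p m k) = iZp p m k 2 from (map_ofNat _ 2).symm, ← map_mul,
          mul_inv_cancel₀ h2ne, map_one]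
      simpa [map_ofNat] using congrArg C h1
    -- coprimality
    have hfg : IsCoprime ((X ^ 2 + 1 : A)) (X ^ 2 + C b * X + 1) :=
      ⟨1 + C c * C b * X, -(C c * C b * X), by
        linear_combination (-(C c) * X ^ 2 : A) * hCb + (-(X ^ 2) : A) * hc3⟩
    have hfh : IsCoprime ((X ^ 2 + 1 : A)) (X ^ 2 - C b * X + 1) :=
      ⟨1 - C c * C b * X, C c * C b * X, by
        linear_combination (-(C c) * X ^ 2 : A) * hCb + (-(X ^ 2) : A) * hc3⟩
    have hgh : IsCoprime ((X ^ 2 + C b * X + 1 : A)) (X ^ 2 - C b * X + 1) :=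
      ⟨C d - C d * C c * C b * X, C d + C d * C c * C b * X, by
        linear_combination (-(2 * C d * C c * X ^ 2) : A) * hCb +
          (-(2 * C d * X ^ 2) : A) * hc3 + hd2⟩
    -- the key factorization
    have h6 : (X ^ 6 + 1 : A) =
        (X ^ 2 + 1) * ((X ^ 2 + C b * X + 1) * (X ^ 2 - C b * X + 1)) := by
      linear_combination (X ^ 2 * (X ^ 2 + 1) : A) * hCb
    have key : (X ^ (6 * p ^ s) + 1 : A) =
        (X ^ 2 + 1) ^ p ^ s *
          ((X ^ 2 + C b * X + 1) ^ p ^ s * (X ^ 2 - C b * X + 1) ^ p ^ s) := by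
      calc (X ^ (6 * p ^ s) + 1 : A) = (X ^ 6) ^ p ^ s + 1 ^ p ^ s := by
            rw [← pow_mul, one_pow]
        _ = ((X ^ 6 + 1 : A)) ^ p ^ s := (add_pow_char_pow ..).symm
        _ = _ := by rw [h6, mul_pow, mul_pow]
    have hco1 : IsCoprime (Ideal.span {((X ^ 2 + 1 : A) ^ p ^ s)})
        (Ideal.span {((X ^ 2 + C b * X + 1 : A) ^ p ^ s * (X ^ 2 - C b * X + 1) ^ p ^ s)}) := by
      rw [Ideal.isCoprime_span_singleton_iff]
      have := (hfg.mul_right hfh).pow (m := p ^ s) (n := p ^ s)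
      rwa [mul_pow] at this
    have hco2 : IsCoprime (Ideal.span {((X ^ 2 + C b * X + 1 : A) ^ p ^ s)})
        (Ideal.span {((X ^ 2 - C b * X + 1 : A) ^ p ^ s)}) := by
      rw [Ideal.isCoprime_span_singleton_iff]
      exact hgh.pow
    have hspan1 : Ideal.span {(X ^ (6 * p ^ s) + 1 : A)} =
        Ideal.span {((X ^ 2 + 1 : A) ^ p ^ s)} *
          Ideal.span {((X ^ 2 + C b * X + 1 : A) ^ p ^ s * (X ^ 2 - C b * X + 1) ^ p ^ s)} := by
      rw [Ideal.span_singleton_mul_span_singleton, key]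
    have hspan2 : Ideal.span
        {((X ^ 2 + C b * X + 1 : A) ^ p ^ s * (X ^ 2 - C b * X + 1) ^ p ^ s)} =
        Ideal.span {((X ^ 2 + C b * X + 1 : A) ^ p ^ s)} *
          Ideal.span {((X ^ 2 - C b * X + 1 : A) ^ p ^ s)} :=
      (Ideal.span_singleton_mul_span_singleton _ _).symm
    exact ⟨(Ideal.quotEquivOfEq hspan1).trans
      ((Ideal.quotientMulEquivQuotientProd _ _ hco1).trans
        (RingEquiv.prodCongr (RingEquiv.refl _)
          ((Ideal.quotEquivOfEq hspan2).trans
            (Ideal.quotientMulEquivQuotientProd _ _ hco2))))⟩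
end
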